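/- arXiv:1807.09089 — 3 statements merged into one kernel-verified Lean document; each statement's English description precedes it below -/
import Mathlib

section
/- Let K actions have i.i.d. reward sequences as in the setup and let π be any policy. Then the risk-averse regret admits the exact decomposition R_π(T) = Σ_{k=1}^K E[τ_{k,T}]·Γ_k + Σ_{t=1}^T E[( Σ_{k∈[K]\{k*}} (1[π_t = k] − Pr[π_t = k])·Δ_k )²]. -/
/-!
Fix a round `t` and write `p_k = Pr[π_t = k]`. Since `π_t` is independent of the round-`t`
rewards, the reward actually received, `X_{π_t,t}`, is a mixture of the laws of the `X_{k,t}`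
with weights `p_k`, and the law of total variance gives
`Var(X_{π_t,t}) = Σ_k p_k σ_k² + Var(μ_{π_t})`. Hence the round-`t` regret is
`Σ_k p_k Γ_k + Var(μ_{π_t})`, and because `Σ_k (1[π_t = k] - p_k) = 0` the centred variable
`μ_{π_t} - E[μ_{π_t}]` equals `Σ_{k ≠ k*} (1[π_t = k] - p_k) Δ_k`. Summing over `t` and using
`E[τ_{k,T}] = Σ_t p_k` gives the decomposition.
-/
open MeasureTheory ProbabilityTheory Finset

lemma apply_eq_sum_indicator {Ω ι E : Type*} [Fintype ι] [AddCommMonoid E]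
    (X : ι → Ω → E) (g : Ω → ι) :
    (fun ω => X (g ω) ω) = fun ω => ∑ i, {ω | g ω = i}.indicator (X i) ω := by
  classical
  funext ω
  simp [Set.indicator_apply]

lemma sum_erase_ite_sub_mul_sub {ι : Type*} [Fintype ι] [DecidableEq ι] {p : ι → ℝ}
    (hp : ∑ k, p k = 1) (m : ι → ℝ) (i k₀ : ι) :
    ∑ k ∈ univ.erase k₀, ((if i = k then (1 : ℝ) else 0) - p k) * (m k - m k₀)
      = m i - ∑ k, p k * m k := by
  rw [Finset.sum_erase _ (by simp)]
  simp only [sub_mul, ite_mul, one_mul, zero_mul, Finset.sum_sub_distrib, Finset.sum_ite_eq,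
    Finset.mem_univ, if_true, mul_sub, ← Finset.sum_mul, hp]
  ring

section Selection

variable {Ω ι : Type*} [MeasurableSpace Ω] {P : Measure Ω}
  [Fintype ι] [MeasurableSpace ι] [MeasurableSingletonClass ι] {g : Ω → ι}

lemma sum_measureReal_fiber_eq_one [IsProbabilityMeasure P] (hg : Measurable g) :
    ∑ i, P.real {ω | g ω = i} = 1 := by
  show ∑ i, P.real (g ⁻¹' {i}) = 1
  rw [sum_measureReal_preimage_singleton _ fun i _ => hg (measurableSet_singleton i)]
  simp

lemma memLp_apply {p : ENNReal} {X : ι → Ω → ℝ} (hg : Measurable g)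
    (hX : ∀ i, MemLp (X i) p P) : MemLp (fun ω => X (g ω) ω) p P := by
  rw [apply_eq_sum_indicator]
  exact memLp_finsetSum _ fun i _ => (hX i).indicator (hg (measurableSet_singleton i))

lemma integral_comp_eq_sum [IsFiniteMeasure P] (hg : Measurable g) (f : ι → ℝ) :
    ∫ ω, f (g ω) ∂P = ∑ i, P.real {ω | g ω = i} * f i := by
  have hfiber : ∀ i, MeasurableSet {ω | g ω = i} := fun i => hg (measurableSet_singleton i)
  rw [apply_eq_sum_indicator (fun i _ => f i),
    integral_finsetSum _ fun i _ => (integrable_const (f i)).indicator (hfiber i)]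
  simp only [integral_indicator_const _ (hfiber _), smul_eq_mul]

lemma integral_apply_of_indepFun {X : ι → Ω → ℝ} (hg : Measurable g)
    (hind : IndepFun g (fun ω i => X i ω) P) (hX : ∀ i, Integrable (X i) P) :
    ∫ ω, X (g ω) ω ∂P = ∑ i, P.real {ω | g ω = i} * ∫ ω, X i ω ∂P := by
  have hfiber : ∀ i, MeasurableSet {ω | g ω = i} := fun i => hg (measurableSet_singleton i)
  rw [apply_eq_sum_indicator, integral_finsetSum _ fun i _ => (hX i).indicator (hfiber i)]
  refine Finset.sum_congr rfl fun i _ => ?_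
  have hindep_i : IndepFun ({ω | g ω = i}.indicator (1 : Ω → ℝ)) (X i) P :=
    hind.comp (measurable_of_finite (({i} : Set ι).indicator (1 : ι → ℝ)))
      (measurable_pi_apply i)
  have hprod : {ω | g ω = i}.indicator (X i) = {ω | g ω = i}.indicator 1 * X i := by
    funext ω
    by_cases h : g ω = i <;> simp [Set.indicator, h]
  rw [hprod, hindep_i.integral_mul_eq_mul_integral
      ((measurable_one.indicator (hfiber i)).aestronglyMeasurable) (hX i).aestronglyMeasurable,
    integral_indicator_one (hfiber i)]

theorem variance_apply_of_indepFun [IsProbabilityMeasure P] {X : ι → Ω → ℝ} (hg : Measurable g)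
    (hind : IndepFun g (fun ω i => X i ω) P) (hX : ∀ i, MemLp (X i) 2 P) :
    variance (fun ω => X (g ω) ω) P
      = ∑ i, P.real {ω | g ω = i} * variance (X i) P
        + variance (fun ω => ∫ x, X (g ω) x ∂P) P := by
  set p := fun i => P.real {ω | g ω = i}
  set m := fun i => ∫ x, X i x ∂P
  have hind_sq : IndepFun g (fun ω i => X i ω ^ 2) P :=
    hind.comp measurable_id (measurable_pi_lambda _ fun i => (measurable_pi_apply i).pow_const 2)
  have hsecond : ∫ ω, X (g ω) ω ^ 2 ∂P = ∑ i, p i * (variance (X i) P + m i ^ 2) := by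
    rw [integral_apply_of_indepFun (X := fun i ω => X i ω ^ 2) hg hind_sq
      fun i => (hX i).integrable_sq]
    refine Finset.sum_congr rfl fun i _ => ?_
    rw [variance_eq_sub (hX i)]
    simp only [Pi.pow_apply, m, sub_add_cancel, p]
  rw [variance_eq_sub (memLp_apply hg hX),
    variance_eq_sub (memLp_apply (X := fun i _ => m i) hg fun i => memLp_const _)]
  simp only [Pi.pow_apply]
  rw [hsecond, integral_apply_of_indepFun hg hind fun i => (hX i).integrable one_le_two,
    integral_comp_eq_sum hg (fun i => m i ^ 2), integral_comp_eq_sum hg m]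
  simp only [mul_add, Finset.sum_add_distrib]
  ring

theorem variance_comp_eq_integral_sq [IsProbabilityMeasure P] [DecidableEq ι] (hg : Measurable g)
    (m : ι → ℝ) (k₀ : ι) :
    variance (fun ω => m (g ω)) P
      = ∫ ω, (∑ k ∈ univ.erase k₀,
          ((if g ω = k then (1 : ℝ) else 0) - P.real {ω' | g ω' = k}) * (m k - m k₀)) ^ 2 ∂P := by
  change variance (m ∘ g) P = _
  rw [variance_eq_integral ((measurable_of_finite m).comp hg).aemeasurable]
  simp only [Function.comp_apply]
  rw [integral_comp_eq_sum hg m]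
  simp only [sum_erase_ite_sub_mul_sub (sum_measureReal_fiber_eq_one hg)]

lemma integral_sum_ite_eq_sum_measureReal [IsFiniteMeasure P] [DecidableEq ι] {τ : Type*}
    [Fintype τ] {π : τ → Ω → ι} (hπ : ∀ t, Measurable (π t)) (k : ι) :
    ∫ ω, (∑ t, if π t ω = k then (1 : ℝ) else 0) ∂P = ∑ t, P.real {ω | π t ω = k} := by
  rw [integral_finsetSum (f := fun t ω => if π t ω = k then (1 : ℝ) else 0) _
    fun t _ => (Integrable.of_finite (f := fun i => if i = k then (1 : ℝ) else 0)).comp_measurable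
      (hπ t)]
  refine Finset.sum_congr rfl fun t _ => ?_
  rw [integral_comp_eq_sum (f := fun i => if i = k then (1 : ℝ) else 0) (hπ t)]
  simp

theorem variance_sub_mul_integral_apply_of_indepFun [IsProbabilityMeasure P] [DecidableEq ι]
    (lam : ℝ) {X : ι → Ω → ℝ} (hg : Measurable g) (hind : IndepFun g (fun ω i => X i ω) P)
    (hX : ∀ i, MemLp (X i) 2 P) {m v : ι → ℝ} (hmean : ∀ i, ∫ ω, X i ω ∂P = m i)
    (hvar : ∀ i, variance (X i) P = v i) (k₀ : ι) :
    variance (fun ω => X (g ω) ω) P - lam * ∫ ω, X (g ω) ω ∂P - (v k₀ - lam * m k₀)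
      = ∑ k, P.real {ω | g ω = k} * ((v k - lam * m k) - (v k₀ - lam * m k₀))
        + ∫ ω, (∑ k ∈ univ.erase k₀,
            ((if g ω = k then (1 : ℝ) else 0) - P.real {ω' | g ω' = k}) * (m k - m k₀)) ^ 2 ∂P := by
  rw [variance_apply_of_indepFun hg hind hX,
    integral_apply_of_indepFun hg hind fun i => (hX i).integrable one_le_two,
    ← variance_comp_eq_integral_sq hg m k₀]
  simp only [hmean, hvar, mul_sub, Finset.sum_sub_distrib, mul_left_comm _ lam, ← Finset.mul_sum,
    ← Finset.sum_mul, sum_measureReal_fiber_eq_one hg]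
  ring

end Selection

theorem regret_decomposition_general
    {Ω : Type*} [MeasurableSpace Ω] (P : Measure Ω) [IsProbabilityMeasure P]
    (K T : ℕ)
    (lam : ℝ)
    -- rewards: `X k t` is the reward of action `k` at time `t`
    (X : Fin K → Fin T → Ω → ℝ)
    (hXL2 : ∀ k t, MemLp (X k t) 2 P)
    (m v : Fin K → ℝ)
    (hmean : ∀ k t, ∫ ω, X k t ω ∂P = m k)
    (hvar : ∀ k t, variance (X k t) P = v k)
    -- the policy
    (π : Fin T → Ω → Fin K)
    (hπmeas : ∀ t, Measurable (π t))
    -- the action at time `t` is independent of the time-`t` rewards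
    (hπindep : ∀ t, IndepFun (π t) (fun ω (k : Fin K) => X k t ω) P)
    -- the optimal action `k*`
    (kstar : Fin K) :
    -- `R_π(T) = Σ_k E[τ_{k,T}]·Γ_k + Σ_t E[(Σ_{k≠k*}(1[π_t=k] − Pr[π_t=k])·Δ_k)²]`
    (∑ t, (variance (fun ω => X (π t ω) t ω) P - lam * ∫ ω, X (π t ω) t ω ∂P))
        - T * (v kstar - lam * m kstar)
      = (∑ k, (∫ ω, (∑ t, if π t ω = k then (1:ℝ) else 0) ∂P)
            * ((v k - lam * m k) - (v kstar - lam * m kstar)))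
        + ∑ t, ∫ ω, (∑ k ∈ Finset.univ.erase kstar,
            ((if π t ω = k then (1:ℝ) else 0) - (P {ω' | π t ω' = k}).toReal)
              * (m k - m kstar)) ^ 2 ∂P := by
  calc _ = ∑ t, (variance (fun ω => X (π t ω) t ω) P - lam * ∫ ω, X (π t ω) t ω ∂P
          - (v kstar - lam * m kstar)) := by simp [Finset.sum_sub_distrib, mul_sub]
    _ = _ := by
      rw [Finset.sum_congr rfl fun t _ => variance_sub_mul_integral_apply_of_indepFun lam
        (hπmeas t) (hπindep t) (fun k => hXL2 k t) (fun k => hmean k t) (fun k => hvar k t) kstar,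
        Finset.sum_add_distrib, Finset.sum_comm]
      simp only [integral_sum_ite_eq_sum_measureReal hπmeas, Finset.sum_mul]
      rfl

/-- **Regret decomposition (Lemma 2).**
The risk-averse regret of any policy decomposes exactly as
`R_π(T) = Σ_k E[τ_{k,T}]·Γ_k + Σ_t E[(Σ_{k≠k*} (1[π_t = k] − Pr[π_t = k])·Δ_k)²]`. -/
theorem regret_decomposition
    {Ω : Type*} [MeasurableSpace Ω] (P : Measure Ω) [IsProbabilityMeasure P]
    (K T : ℕ) (hK : 0 < K)
    (lam : ℝ) (hlam : 0 ≤ lam)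
    -- rewards: `X k t` is the reward of action `k` at time `t`
    (X : Fin K → Fin T → Ω → ℝ)
    (hXmeas : ∀ k t, Measurable (X k t))
    (hXL2 : ∀ k t, MemLp (X k t) 2 P)
    -- the rewards are jointly independent across actions and times ...
    (hXindep : iIndepFun (fun p : Fin K × Fin T => X p.1 p.2) P)
    -- ... and identically distributed over time for each action
    (hXid : ∀ k (t t' : Fin T), Measure.map (X k t) P = Measure.map (X k t') P)
    (m v : Fin K → ℝ)
    (hmean : ∀ k t, ∫ ω, X k t ω ∂P = m k)
    (hvar : ∀ k t, variance (X k t) P = v k)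
    -- the policy
    (π : Fin T → Ω → Fin K)
    (hπmeas : ∀ t, Measurable (π t))
    -- the action at time `t` is independent of the time-`t` rewards
    (hπindep : ∀ t, IndepFun (π t) (fun ω (k : Fin K) => X k t ω) P)
    -- the optimal action `k*`
    (kstar : Fin K)
    (hkstar : ∀ k, v kstar - lam * m kstar ≤ v k - lam * m k) :
    -- `R_π(T) = Σ_k E[τ_{k,T}]·Γ_k + Σ_t E[(Σ_{k≠k*}(1[π_t=k] − Pr[π_t=k])·Δ_k)²]`
    (∑ t, (variance (fun ω => X (π t ω) t ω) P - lam * ∫ ω, X (π t ω) t ω ∂P))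
        - T * (v kstar - lam * m kstar)
      = (∑ k, (∫ ω, (∑ t, if π t ω = k then (1:ℝ) else 0) ∂P)
            * ((v k - lam * m k) - (v kstar - lam * m kstar)))
        + ∑ t, ∫ ω, (∑ k ∈ Finset.univ.erase kstar,
            ((if π t ω = k then (1:ℝ) else 0) - (P {ω' | π t ω' = k}).toReal)
              * (m k - m kstar)) ^ 2 ∂P :=
  regret_decomposition_general P K T lam X hXL2 m v hmean hvar π hπmeas hπindep kstar
end

section
/- Let X_1,…,X_K be independent square-integrable real random variables with means μ_1,…,μ_K and variances σ_1²,…,σ_K², let λ ≥ 0, and let A be a [K]-valued random variable independent of (X_1,…,X_K) with p_k = Pr[A = k]. Fix k* ∈ [K] and set Δ_k = μ_k − μ_{k*}, MV_k = σ_k² − λμ_k. Then MV(X_A) = Σ_{k=1}^K p_k·MV_k + E[( Σ_{k∈[K]\{k*}} (1[A = k] − p_k)·Δ_k )²]. -/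
/-!
Conditionally on `A = k`, independence makes the reward `X_A` distributed as `X_k`, so
`E[X_A] = Σ p_k μ_k` and, by the law of total variance, `Var(X_A) = Σ p_k σ_k² + Var(μ_A)`.
Since `Σ p_k = 1`, the sum inside the last expectation is exactly `μ_A − E[μ_A]`: the reference
arm `k*` cancels out.
-/

open MeasureTheory ProbabilityTheory Finset

theorem Finset.sum_erase_boole_sub_mul_sub {ι R : Type*} [Fintype ι] [DecidableEq ι]
    [CommRing R] {p : ι → R} (hp : ∑ k, p k = 1) (m : ι → R) (a k₀ : ι) :
    ∑ k ∈ univ.erase k₀, ((if a = k then 1 else 0) - p k) * (m k - m k₀)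
      = m a - ∑ k, p k * m k := by
  rw [Finset.sum_erase _ (by simp)]
  simp [sub_mul, mul_sub, Finset.sum_sub_distrib, ← Finset.sum_mul, hp]

theorem Finset.sum_indicator_setOf_eq_apply {Ω ι M : Type*} [Fintype ι] [AddCommMonoid M]
    (A : Ω → ι) (f : ι → Ω → M) (ω : Ω) :
    ∑ k, {ω | A ω = k}.indicator (f k) ω = f (A ω) ω := by
  classical
  simp [Set.indicator_apply]

namespace ProbabilityTheory

theorem integral_sub_const_sq_eq_variance_add {Ω : Type*} [MeasurableSpace Ω] {P : Measure Ω}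
    [IsProbabilityMeasure P] {X : Ω → ℝ} (hX : MemLp X 2 P) (c : ℝ) :
    ∫ ω, (X ω - c) ^ 2 ∂P = variance X P + (∫ ω, X ω ∂P - c) ^ 2 := by
  have h := variance_eq_sub (X := fun ω => X ω - c) (hX.sub (memLp_const c))
  rw [variance_sub_const hX.aestronglyMeasurable] at h
  rw [h, integral_sub (hX.integrable one_le_two) (integrable_const c)]
  simp

variable {Ω ι : Type*} [MeasurableSpace Ω] {P : Measure Ω}
  [MeasurableSpace ι] [MeasurableSingletonClass ι] [Fintype ι] {A : Ω → ι}

theorem IndepFun.integral_eq_sum_measureReal_smul_integral {β E : Type*} [MeasurableSpace β]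
    [NormedAddCommGroup E] [NormedSpace ℝ E] {Z : Ω → β}
    (hAZ : IndepFun A Z P) (hA : Measurable A) (hZ : AEMeasurable Z P) {F : ι → β → E}
    (hF : ∀ k, AEStronglyMeasurable (F k) (P.map Z))
    (hFint : ∀ k, Integrable (fun ω => F k (Z ω)) P) :
    ∫ ω, F (A ω) (Z ω) ∂P = ∑ k, P.real {ω | A ω = k} • ∫ ω, F k (Z ω) ∂P := by
  have hfiber : ∀ k, MeasurableSet {ω | A ω = k} := fun k => hA (measurableSet_singleton k)
  simp_rw [← sum_indicator_setOf_eq_apply A fun k ω => F k (Z ω)]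
  rw [integral_finsetSum _ fun k _ => (hFint k).indicator (hfiber k)]
  refine Finset.sum_congr rfl fun k _ => ?_
  rw [integral_indicator (hfiber k)]
  exact Indep.setIntegral_eq_smul hA.comap_le hAZ hZ ⟨{k}, measurableSet_singleton k, rfl⟩
    (hF k)

variable {X : ι → Ω → ℝ}

theorem IndepFun.integral_indexed_eq_sum (hAX : IndepFun A (fun ω k => X k ω) P)
    (hA : Measurable A) (hX : ∀ k, Integrable (X k) P) :
    ∫ ω, X (A ω) ω ∂P = ∑ k, P.real {ω | A ω = k} * ∫ ω, X k ω ∂P :=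
  hAX.integral_eq_sum_measureReal_smul_integral hA
    (aemeasurable_pi_lambda _ fun k => (hX k).aemeasurable) (F := fun k z => z k)
    (fun k => (measurable_pi_apply k).aestronglyMeasurable) hX

variable [IsProbabilityMeasure P]

theorem integral_comp_eq_sum_measureReal_mul (hA : Measurable A) (g : ι → ℝ) :
    ∫ ω, g (A ω) ∂P = ∑ k, P.real {ω | A ω = k} * g k := by
  simpa using (indepFun_const_right A (0 : ℝ)).integral_eq_sum_measureReal_smul_integral hA
    aemeasurable_const (F := fun k _ => g k) (fun _ => aestronglyMeasurable_const)
    fun _ => integrable_const (μ := P) _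

theorem sum_measureReal_setOf_eq_one (hA : Measurable A) : ∑ k, P.real {ω | A ω = k} = 1 := by
  simpa using (integral_comp_eq_sum_measureReal_mul (P := P) hA fun _ => 1).symm

theorem IndepFun.variance_indexed_eq_sum (hAX : IndepFun A (fun ω k => X k ω) P)
    (hA : Measurable A) (hX : ∀ k, MemLp (X k) 2 P) :
    variance (fun ω => X (A ω) ω) P = ∑ k, P.real {ω | A ω = k} *
      (variance (X k) P + (∫ ω, X k ω ∂P - ∫ ω, X (A ω) ω ∂P) ^ 2) := by
  set S := ∫ ω, X (A ω) ω ∂P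
  have hmeas : AEMeasurable (fun ω => X (A ω) ω) P := by
    simp_rw [← sum_indicator_setOf_eq_apply A X]
    exact Finset.aemeasurable_fun_sum _ fun k _ =>
      (hX k).aemeasurable.indicator (hA (measurableSet_singleton k))
  rw [variance_eq_integral hmeas, hAX.integral_eq_sum_measureReal_smul_integral hA
    (aemeasurable_pi_lambda _ fun k => (hX k).aemeasurable) (F := fun k z => (z k - S) ^ 2)
    (fun k => (by fun_prop : Measurable fun z : ι → ℝ => (z k - S) ^ 2).aestronglyMeasurable)
    fun k => ((hX k).sub (memLp_const S)).integrable_sq]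
  simp only [smul_eq_mul, integral_sub_const_sq_eq_variance_add (hX _)]

end ProbabilityTheory

theorem mean_variance_of_randomly_chosen_action_general
    {Ω : Type*} [MeasurableSpace Ω] (P : Measure Ω) [IsProbabilityMeasure P]
    (K : ℕ)
    (lam : ℝ)
    (X : Fin K → Ω → ℝ)
    (hXL2 : ∀ k, MemLp (X k) 2 P)
    (m v : Fin K → ℝ)
    (hmean : ∀ k, ∫ ω, X k ω ∂P = m k)
    (hvar : ∀ k, variance (X k) P = v k)
    (A : Ω → Fin K) (hA : Measurable A)
    (hAX : IndepFun A (fun ω (k : Fin K) => X k ω) P)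
    (kstar : Fin K) :
    variance (fun ω => ∑ k, (if A ω = k then (1:ℝ) else 0) * X k ω) P
        - lam * ∫ ω, (∑ k, (if A ω = k then (1:ℝ) else 0) * X k ω) ∂P
      = (∑ k, (P {ω | A ω = k}).toReal * (v k - lam * m k))
        + ∫ ω, (∑ k ∈ Finset.univ.erase kstar,
            ((if A ω = k then (1:ℝ) else 0) - (P {ω' | A ω' = k}).toReal)
              * (m k - m kstar)) ^ 2 ∂P := by
  simp only [← measureReal_def]
  have hY :
      (fun ω => ∑ k, (if A ω = k then (1:ℝ) else 0) * X k ω) = fun ω => X (A ω) ω := by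
    funext ω
    simp
  have hcentred : ∀ ω, ∑ k ∈ univ.erase kstar,
      ((if A ω = k then (1:ℝ) else 0) - P.real {ω' | A ω' = k}) * (m k - m kstar)
        = m (A ω) - ∑ k, P.real {ω | A ω = k} * m k :=
    fun ω => sum_erase_boole_sub_mul_sub (sum_measureReal_setOf_eq_one hA) m (A ω) kstar
  rw [hY, hAX.variance_indexed_eq_sum hA hXL2,
    hAX.integral_indexed_eq_sum hA fun k => (hXL2 k).integrable one_le_two]
  simp only [hcentred, hvar, hmean]
  set S := ∑ k, P.real {ω | A ω = k} * m k
  rw [integral_comp_eq_sum_measureReal_mul hA fun a => (m a - S) ^ 2, Finset.mul_sum,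
    ← sum_sub_distrib, ← sum_add_distrib]
  exact sum_congr rfl fun k _ => by ring

/-- **Mean-variance of a randomly chosen action's reward.** If `A` is a `[K]`-valued
random variable independent of the independent square-integrable rewards `X_1, …, X_K`,
`λ ≥ 0`, `k* ∈ [K]`, `Δ_k = μ_k − μ_{k*}` and `MV_k = σ_k² − λμ_k`, then
`MV(X_A) = Σ_k p_k·MV_k + E[(Σ_{k≠k*} (1[A = k] − p_k)·Δ_k)²]` where `p_k = Pr[A = k]`
and `MV(X) = Var(X) − λ·E[X]`. -/
theorem mean_variance_of_randomly_chosen_action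
    {Ω : Type*} [MeasurableSpace Ω] (P : Measure Ω) [IsProbabilityMeasure P]
    (K : ℕ) (hK : 0 < K)
    (lam : ℝ) (hlam : 0 ≤ lam)
    (X : Fin K → Ω → ℝ)
    (hXmeas : ∀ k, Measurable (X k))
    (hXL2 : ∀ k, MemLp (X k) 2 P)
    (hXindep : iIndepFun X P)
    (m v : Fin K → ℝ)
    (hmean : ∀ k, ∫ ω, X k ω ∂P = m k)
    (hvar : ∀ k, variance (X k) P = v k)
    (A : Ω → Fin K) (hA : Measurable A)
    (hAX : IndepFun A (fun ω (k : Fin K) => X k ω) P)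
    (kstar : Fin K) :
    variance (fun ω => ∑ k, (if A ω = k then (1:ℝ) else 0) * X k ω) P
        - lam * ∫ ω, (∑ k, (if A ω = k then (1:ℝ) else 0) * X k ω) ∂P
      = (∑ k, (P {ω | A ω = k}).toReal * (v k - lam * m k))
        + ∫ ω, (∑ k ∈ Finset.univ.erase kstar,
            ((if A ω = k then (1:ℝ) else 0) - (P {ω' | A ω' = k}).toReal)
              * (m k - m kstar)) ^ 2 ∂P :=
  mean_variance_of_randomly_chosen_action_general P K lam X hXL2 m v hmean hvar A hA hAX kstar
end

section
/- For any full-information policy π on 2 actions and any horizon T ≥ 100, there exists an assignment 𝓕 = (f_1, f_2) of reward distributions to the two actions such that the risk-averse regret satisfies R_π(T) ≥ T/(4e). -/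
open MeasureTheory ProbabilityTheory Finset

/-!
Put all the risk on the arm `i` that the policy plays most often while it has seen only zero
rewards. Its rewards vanish except for a rare symmetric spike `±M` of total probability
`q = 1/(2(T+1))`, and the other arm is constantly `0`. By the union bound, some reward before
round `T` is nonzero with probability at most `T q ≤ 1/2`, so in each of the at least `T/2`
rounds in which the all-zero history leads to `i`, the policy plays `i` with probability
`p ≥ 1/2`. The decision is independent of the current rewards, so the played reward is
`1_{A = i} X_i` with mean `0` and variance `p q M² = p`, while the safe arm has mean-variance
`0`. Hence the regret is at least `T/4`.
-/

lemma ENNReal.ofReal_div_two_mul_two (q : ℝ) : ENNReal.ofReal (q / 2) * 2 = ENNReal.ofReal q := by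
  rw [← ENNReal.ofReal_ofNat 2, ← ENNReal.ofReal_mul' zero_le_two,
    div_mul_cancel₀ q two_ne_zero]

noncomputable def spikeMeasure (q M : ℝ) : Measure ℝ :=
  ENNReal.ofReal (1 - q) • Measure.dirac 0 +
    ENNReal.ofReal (q / 2) • (Measure.dirac M + Measure.dirac (-M))

namespace spikeMeasure

variable {q : ℝ} (M : ℝ)

lemma isProbabilityMeasure (hq0 : 0 ≤ q) (hq1 : q ≤ 1) :
    IsProbabilityMeasure (spikeMeasure q M) := by
  constructor
  simp only [spikeMeasure, Measure.add_apply, Measure.smul_apply, measure_univ, smul_eq_mul,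
    mul_one, one_add_one_eq_two, ENNReal.ofReal_div_two_mul_two]
  rw [← ENNReal.ofReal_add (by linarith) hq0]
  norm_num

lemma integrable (f : ℝ → ℝ) : Integrable f (spikeMeasure q M) := by
  have hdirac (x : ℝ) : Integrable f (Measure.dirac x) := integrable_dirac enorm_lt_top
  exact ((hdirac 0).smul_measure ENNReal.ofReal_ne_top).add_measure
    (((hdirac M).add_measure (hdirac (-M))).smul_measure ENNReal.ofReal_ne_top)

lemma integral_eq (hq0 : 0 ≤ q) (hq1 : q ≤ 1) (f : ℝ → ℝ) :
    ∫ x, f x ∂spikeMeasure q M = (1 - q) * f 0 + q / 2 * (f M + f (-M)) := by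
  have hdirac (x : ℝ) : Integrable f (Measure.dirac x) := integrable_dirac enorm_lt_top
  rw [spikeMeasure, integral_add_measure ((hdirac 0).smul_measure ENNReal.ofReal_ne_top)
      (((hdirac M).add_measure (hdirac (-M))).smul_measure ENNReal.ofReal_ne_top),
    integral_smul_measure, integral_smul_measure, integral_add_measure (hdirac M) (hdirac (-M))]
  simp [ENNReal.toReal_ofReal (sub_nonneg.2 hq1),
    ENNReal.toReal_ofReal (by positivity : 0 ≤ q / 2)]

lemma integral_id (hq0 : 0 ≤ q) (hq1 : q ≤ 1) : ∫ x, x ∂spikeMeasure q M = 0 := by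
  rw [integral_eq M hq0 hq1 (fun x => x)]
  ring

lemma variance_id (hq0 : 0 ≤ q) (hq1 : q ≤ 1) :
    variance id (spikeMeasure q M) = q * M ^ 2 := by
  have := isProbabilityMeasure M hq0 hq1
  rw [variance_eq_sub ((memLp_two_iff_integrable_sq measurable_id.aestronglyMeasurable).2
    (integrable M _))]
  simp only [id, Pi.pow_apply]
  rw [integral_eq M hq0 hq1 (fun x => x ^ 2), integral_id M hq0 hq1]
  ring

lemma real_compl_zero_le (hq0 : 0 ≤ q) : (spikeMeasure q M).real {0}ᶜ ≤ q := by
  refine ENNReal.toReal_le_of_le_ofReal hq0 ?_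
  calc spikeMeasure q M {0}ᶜ
      = ENNReal.ofReal (q / 2) * (Measure.dirac M {0}ᶜ + Measure.dirac (-M) {0}ᶜ) := by
        simp [spikeMeasure, mul_add]
    _ ≤ ENNReal.ofReal (q / 2) * 2 := by
        gcongr
        exact (add_le_add prob_le_one prob_le_one).trans_eq one_add_one_eq_two
    _ = ENNReal.ofReal q := ENNReal.ofReal_div_two_mul_two q

end spikeMeasure

namespace ProbabilityTheory

variable {Ω β : Type*} [MeasurableSpace Ω] [MeasurableSpace β] {P : Measure Ω}
  {A : Ω → β} {Y : Ω → ℝ} {s : Set β}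

lemma IndepFun.integral_indicator_preimage (hAY : IndepFun A Y P) (hA : Measurable A)
    (hs : MeasurableSet s) (hY : AEStronglyMeasurable Y P) :
    ∫ ω, (A ⁻¹' s).indicator Y ω ∂P = P.real (A ⁻¹' s) * ∫ ω, Y ω ∂P := by
  have hAY' : IndepFun ((A ⁻¹' s).indicator (1 : Ω → ℝ)) Y P :=
    hAY.comp (measurable_one.indicator hs) measurable_id
  have hind : (A ⁻¹' s).indicator Y = (A ⁻¹' s).indicator 1 * Y := by
    ext ω; by_cases h : ω ∈ A ⁻¹' s <;> simp [h]
  rw [hind, hAY'.integral_mul_eq_mul_integral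
    (measurable_one.indicator (hA hs)).aestronglyMeasurable hY, integral_indicator_one (hA hs)]

lemma IndepFun.variance_indicator_preimage [IsProbabilityMeasure P] (hAY : IndepFun A Y P)
    (hA : Measurable A) (hs : MeasurableSet s) (hY : MemLp Y 2 P) (hmean : ∫ ω, Y ω ∂P = 0) :
    variance ((A ⁻¹' s).indicator Y) P = P.real (A ⁻¹' s) * variance Y P := by
  have hsq : (A ⁻¹' s).indicator Y ^ 2 = (A ⁻¹' s).indicator (Y ^ 2) := by
    ext ω; by_cases h : A ω ∈ s <;> simp [h]
  have hAY2 : IndepFun A (Y ^ 2) P := hAY.comp measurable_id (continuous_pow 2).measurable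
  rw [variance_eq_sub (hY.indicator (hA hs)), variance_eq_sub hY, hsq,
    hAY2.integral_indicator_preimage hA hs hY.integrable_sq.aestronglyMeasurable,
    hAY.integral_indicator_preimage hA hs hY.aestronglyMeasurable, hmean]
  ring

end ProbabilityTheory

section

variable {Ω κ β : Type*} [MeasurableSpace Ω] {P : Measure Ω}

lemma ae_eq_const_of_map_eq_dirac [MeasurableSpace β] [MeasurableSingletonClass β] {Y : Ω → β}
    (hY : AEMeasurable Y P) {c : β} (h : P.map Y = Measure.dirac c) : Y =ᵐ[P] fun _ => c := by
  have : ∀ᵐ x ∂P.map Y, x = c := by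
    rw [h, ae_dirac_eq]
    exact Filter.eventually_pure.2 rfl
  exact ae_of_ae_map hY this

lemma ae_eq_indicator_of_ae_eq_zero [Countable κ] {Y : κ → Ω → ℝ} {A : Ω → κ} {i : κ}
    (hY : ∀ j ≠ i, Y j =ᵐ[P] 0) :
    (fun ω => Y (A ω) ω) =ᵐ[P] (A ⁻¹' {i}).indicator (Y i) := by
  have hY' : ∀ᵐ ω ∂P, ∀ j ≠ i, Y j ω = 0 := by
    rw [ae_all_iff]
    intro j
    by_cases hj : j = i
    · exact ae_of_all _ fun _ h => absurd hj h
    · filter_upwards [hY j hj] with ω h _ using h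
  filter_upwards [hY'] with ω hω
  by_cases h : A ω = i
  · simp [h]
  · simp [h, hω _ h]

end

section history

variable {Ω : Type*} [MeasurableSpace Ω] {P : Measure Ω} {X : Fin 2 → ℕ → Ω → ℝ}

def history (X : Fin 2 → ℕ → Ω → ℝ) (t : ℕ) (ω : Ω) : Fin t → ℝ × ℝ :=
  fun s => (X 0 s ω, X 1 s ω)

lemma measurable_history (hX : ∀ k t, Measurable (X k t)) (t : ℕ) :
    Measurable (history X t) :=
  measurable_pi_lambda _ fun s => (hX 0 s).prodMk (hX 1 s)

lemma indepFun_history (hX : ∀ k t, Measurable (X k t))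
    (hind : iIndepFun (fun p : Fin 2 × ℕ => X p.1 p.2) P) (k : Fin 2) (t : ℕ) :
    IndepFun (history X t) (X k t) P := by
  set S : Finset (Fin 2 × ℕ) := univ ×ˢ range t
  have hdisj : Disjoint S {(k, t)} := by simp [S]
  have hmem (j : Fin 2) (s : Fin t) : (j, (s : ℕ)) ∈ S := by simp [S]
  have hφ : Measurable fun (v : S → ℝ) (s : Fin t) =>
      (v ⟨(0, s), hmem 0 s⟩, v ⟨(1, s), hmem 1 s⟩) :=
    measurable_pi_lambda _ fun s => (measurable_pi_apply _).prodMk (measurable_pi_apply _)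
  have hψ : Measurable fun v : ({(k, t)} : Finset (Fin 2 × ℕ)) → ℝ =>
      v ⟨(k, t), mem_singleton_self _⟩ :=
    measurable_pi_apply _
  exact (hind.indepFun_finset S {(k, t)} hdisj fun p => hX p.1 p.2).comp hφ hψ

lemma measureReal_history_ne_zero_le [IsFiniteMeasure P] (t : ℕ) :
    P.real {ω | history X t ω ≠ 0} ≤
      ∑ s ∈ range t, ∑ k, P.real {ω | X k s ω ≠ 0} := by
  have hsub : {ω | history X t ω ≠ 0} ⊆ ⋃ s ∈ range t, ⋃ k, {ω | X k s ω ≠ 0} := by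
    intro ω hω
    obtain ⟨s, hs⟩ := Function.ne_iff.1 hω
    have : ∃ k, X k s ω ≠ 0 := by
      by_contra! h
      exact hs (Prod.ext (h 0) (h 1))
    simp only [Set.mem_iUnion, mem_range, exists_prop]
    exact ⟨s, s.isLt, this⟩
  calc P.real {ω | history X t ω ≠ 0}
      ≤ P.real (⋃ s ∈ range t, ⋃ k, {ω | X k s ω ≠ 0}) :=
        measureReal_mono hsub (measure_ne_top _ _)
    _ ≤ ∑ s ∈ range t, P.real (⋃ k, {ω | X k s ω ≠ 0}) :=
        measureReal_biUnion_finset_le _ _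
    _ ≤ ∑ s ∈ range t, ∑ k, P.real {ω | X k s ω ≠ 0} :=
        sum_le_sum fun s _ => measureReal_iUnion_fintype_le _

lemma one_sub_measureReal_history_ne_zero_le [IsProbabilityMeasure P]
    (hX : ∀ k t, Measurable (X k t)) {t : ℕ} (φ : (Fin t → ℝ × ℝ) → Fin 2) :
    1 - P.real {ω | history X t ω ≠ 0} ≤ P.real {ω | φ (history X t ω) = φ 0} := by
  have hmeas : MeasurableSet {ω | history X t ω = 0} :=
    measurable_history hX t (measurableSet_singleton 0)
  have hcompl : {ω | history X t ω ≠ 0} = {ω | history X t ω = 0}ᶜ := rfl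
  rw [hcompl, probReal_compl_eq_one_sub hmeas, sub_sub_cancel]
  refine measureReal_mono (fun ω (hω : history X t ω = 0) => ?_) (measure_ne_top _ _)
  simp [hω]

end history

noncomputable def riskyArms (i : Fin 2) (q M : ℝ) : Fin 2 → Measure ℝ :=
  fun k => if k = i then spikeMeasure q M else Measure.dirac 0

section riskyArms

variable {i : Fin 2} {q M : ℝ}

lemma isProbabilityMeasure_riskyArms (hq0 : 0 ≤ q) (hq1 : q ≤ 1) (k : Fin 2) :
    IsProbabilityMeasure (riskyArms i q M k) := by
  unfold riskyArms
  split_ifs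
  exacts [spikeMeasure.isProbabilityMeasure M hq0 hq1, inferInstance]

variable {Ω : Type*} [MeasurableSpace Ω] {P : Measure Ω} [IsProbabilityMeasure P]
  {X : Fin 2 → ℕ → Ω → ℝ}

lemma measureReal_history_ne_zero_le_of_riskyArms (hX : ∀ k t, Measurable (X k t))
    (hmap : ∀ k t, P.map (X k t) = riskyArms i q M k) (hq0 : 0 ≤ q) (t : ℕ) :
    P.real {ω | history X t ω ≠ 0} ≤ t * q := by
  have hk (k : Fin 2) (s : ℕ) : P.real {ω | X k s ω ≠ 0} ≤ if k = i then q else 0 := by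
    have hpre : {ω | X k s ω ≠ 0} = X k s ⁻¹' {0}ᶜ := rfl
    rw [hpre, ← map_measureReal_apply (hX k s) (measurableSet_singleton 0).compl, hmap,
      riskyArms]
    split_ifs
    · exact spikeMeasure.real_compl_zero_le M hq0
    · simp [measureReal_def]
  calc P.real {ω | history X t ω ≠ 0}
      ≤ ∑ s ∈ range t, ∑ k, P.real {ω | X k s ω ≠ 0} := measureReal_history_ne_zero_le t
    _ ≤ ∑ s ∈ range t, ∑ k, if k = i then q else 0 := by gcongr with s _ k; exact hk k s
    _ = t * q := by simp

lemma one_sub_mul_le_measureReal_played_eq (hX : ∀ k t, Measurable (X k t))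
    (hmap : ∀ k t, P.map (X k t) = riskyArms i q M k) (hq0 : 0 ≤ q) {t : ℕ}
    (φ : (Fin t → ℝ × ℝ) → Fin 2) :
    1 - t * q ≤ P.real {ω | φ (history X t ω) = φ 0} :=
  (sub_le_sub_left (measureReal_history_ne_zero_le_of_riskyArms hX hmap hq0 t) 1).trans
    (one_sub_measureReal_history_ne_zero_le hX φ)

lemma variance_sub_mul_integral_played_eq (hX : ∀ k t, Measurable (X k t))
    (hmap : ∀ k t, P.map (X k t) = riskyArms i q M k) (hq0 : 0 ≤ q) (hq1 : q ≤ 1)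
    (hind : iIndepFun (fun p : Fin 2 × ℕ => X p.1 p.2) P) {t : ℕ}
    {φ : (Fin t → ℝ × ℝ) → Fin 2} (hφ : Measurable φ) (lam : ℝ) :
    variance (fun ω => X (φ (history X t ω)) t ω) P
        - lam * ∫ ω, X (φ (history X t ω)) t ω ∂P
      = P.real {ω | φ (history X t ω) = i} * (q * M ^ 2) := by
  have hlaw : P.map (X i t) = spikeMeasure q M := by rw [hmap, riskyArms, if_pos rfl]
  have hsafe : ∀ j ≠ i, X j t =ᵐ[P] 0 := fun j hj =>
    ae_eq_const_of_map_eq_dirac (c := 0) (hX j t).aemeasurable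
      (by rw [hmap, riskyArms, if_neg hj])
  have hae := ae_eq_indicator_of_ae_eq_zero (A := fun ω => φ (history X t ω)) hsafe
  have hmean : ∫ ω, X i t ω ∂P = 0 := by
    rw [← spikeMeasure.integral_id M hq0 hq1, ← hlaw,
      integral_map (hX i t).aemeasurable measurable_id'.aestronglyMeasurable]
  have hmemLp : MemLp (X i t) 2 P := by
    refine (memLp_map_measure_iff aestronglyMeasurable_id (hX i t).aemeasurable).1 ?_
    rw [hlaw]
    exact (memLp_two_iff_integrable_sq aestronglyMeasurable_id).2 (spikeMeasure.integrable M _)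
  have hA : Measurable fun ω => φ (history X t ω) := hφ.comp (measurable_history hX t)
  have hAY : IndepFun (fun ω => φ (history X t ω)) (X i t) P :=
    (indepFun_history hX hind i t).comp hφ measurable_id
  rw [variance_congr hae, integral_congr_ae hae,
    hAY.variance_indicator_preimage hA (measurableSet_singleton i) hmemLp hmean,
    hAY.integral_indicator_preimage hA (measurableSet_singleton i) hmemLp.aestronglyMeasurable,
    hmean, ← variance_id_map (hX i t).aemeasurable, hlaw, spikeMeasure.variance_id M hq0 hq1,
    mul_zero, mul_zero, sub_zero]
  rfl

end riskyArms

lemma min_variance_sub_mul_integral_riskyArms_nonpos (i : Fin 2) (q M lam : ℝ) :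
    min (variance id (riskyArms i q M 0) - lam * ∫ x, x ∂(riskyArms i q M 0))
      (variance id (riskyArms i q M 1) - lam * ∫ x, x ∂(riskyArms i q M 1)) ≤ 0 := by
  fin_cases i
  · exact (min_le_right _ _).trans (by simp [riskyArms, variance_dirac])
  · exact (min_le_left _ _).trans (by simp [riskyArms, variance_dirac])

lemma exists_div_card_le_card_filter_eq {α : Type*} [Fintype α] [DecidableEq α] [Nonempty α]
    (a : ℕ → α) (T : ℕ) :
    ∃ i, (T : ℝ) / Fintype.card α ≤ #{t ∈ range T | a t = i} := by
  obtain ⟨i, -, hi⟩ := exists_le_card_fiber_of_nsmul_le_card_of_maps_to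
    (fun t _ => mem_univ (a t)) univ_nonempty (s := range T) (b := (T : ℝ) / Fintype.card α)
    (by rw [card_univ, nsmul_eq_mul, mul_div_cancel₀ _ (by positivity), card_range])
  exact ⟨i, hi⟩

theorem worst_case_regret_linear_lower_bound_general
    (lam : ℝ)
    (T : ℕ)
    (π : (t : ℕ) → (Fin t → ℝ × ℝ) → Fin 2)
    (hπ : ∀ t, Measurable (π t)) :
    ∃ f : Fin 2 → Measure ℝ, (∀ k, IsProbabilityMeasure (f k)) ∧
      ∀ (Ω : Type) (_ : MeasurableSpace Ω) (P : Measure Ω),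
        IsProbabilityMeasure P →
        ∀ (X : Fin 2 → ℕ → Ω → ℝ),
        (∀ k t, Measurable (X k t)) →
        -- rewards i.i.d. over time and independent across actions ...
        iIndepFun (fun p : Fin 2 × ℕ => X p.1 p.2) P →
        -- ... with action `k`'s rewards distributed according to `f k`
        (∀ k t, Measure.map (X k t) P = f k) →
        (∑ t ∈ Finset.range T,
            (variance (fun ω => X (π t (fun s => (X 0 s.1 ω, X 1 s.1 ω))) t ω) P
              - lam * ∫ ω, X (π t (fun s => (X 0 s.1 ω, X 1 s.1 ω))) t ω ∂P))
          - T * min (variance id (f 0) - lam * ∫ x, x ∂(f 0))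
                    (variance id (f 1) - lam * ∫ x, x ∂(f 1))
          ≥ T / (4 * Real.exp 1) := by
  obtain ⟨i, hi⟩ := exists_div_card_le_card_filter_eq (fun t => π t 0) T
  set q : ℝ := (2 * (T + 1))⁻¹
  set M : ℝ := √(2 * (T + 1))
  have hT0 : (0 : ℝ) ≤ T := T.cast_nonneg
  have hq0 : 0 ≤ q := by positivity
  have hq1 : q ≤ 1 := inv_le_one_of_one_le₀ (by linarith)
  have hqM : q * M ^ 2 = 1 := by
    rw [Real.sq_sqrt (by positivity)]
    exact inv_mul_cancel₀ (by positivity)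
  have hTq : (T : ℝ) * q ≤ 1 / 2 := by
    rw [← div_eq_mul_inv, div_le_iff₀ (by positivity)]
    linarith
  refine ⟨riskyArms i q M, isProbabilityMeasure_riskyArms hq0 hq1, ?_⟩
  intro Ω _ P _ X hX hind hmap
  have hround : ∀ t ∈ range T, (if π t 0 = i then (1 : ℝ) / 2 else 0) ≤
      variance (fun ω => X (π t (history X t ω)) t ω) P
        - lam * ∫ ω, X (π t (history X t ω)) t ω ∂P := by
    intro t ht
    rw [variance_sub_mul_integral_played_eq hX hmap hq0 hq1 hind (hπ t), hqM, mul_one]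
    split_ifs with hπi
    · have hplay := one_sub_mul_le_measureReal_played_eq (P := P) hX hmap hq0 (π t)
      have htT : (t : ℝ) ≤ T := by exact_mod_cast (mem_range.1 ht).le
      rw [hπi] at hplay
      nlinarith
    · exact measureReal_nonneg
  calc (T : ℝ) / (4 * Real.exp 1)
      ≤ T / 4 := div_le_div_of_nonneg_left hT0 (by norm_num)
        (by linarith [Real.one_le_exp zero_le_one])
    _ ≤ #{t ∈ range T | π t 0 = i} * (1 / 2) := by
      simp only [Fintype.card_fin, Nat.cast_ofNat] at hi
      linarith
    _ = ∑ t ∈ range T, if π t 0 = i then (1 : ℝ) / 2 else 0 := by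
      rw [← sum_filter, sum_const, nsmul_eq_mul]
    _ ≤ _ := sum_le_sum hround
    _ ≤ _ := le_sub_self_iff _ |>.2 (mul_nonpos_of_nonneg_of_nonpos hT0
      (min_variance_sub_mul_integral_riskyArms_nonpos i q M lam))

/-- **Theorem 2: an `Ω(T)` worst-case regret lower bound.** For any full-information
policy `π` on 2 actions and any horizon `T ≥ 100`, there exists an assignment
`𝓕 = (f₁, f₂)` of reward distributions to the two actions such that the risk-averse
regret satisfies `R_π(T) ≥ T/(4e)`. Actions are indexed by `Fin 2`; the decision at
round `t ∈ {0, …, T−1}` applies `π t` to the rewards of both actions in the `t`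
previous rounds; `MV(X) = Var(X) − λ·E[X]` and
`R_π(T) = Σ_{t<T} MV(X_{π_t,t}) − T·MV_{k*}`, `k*` being the action of minimal
mean-variance. -/
theorem worst_case_regret_linear_lower_bound
    (lam : ℝ) (hlam : 0 ≤ lam)
    (T : ℕ) (hT : 100 ≤ T)
    (π : (t : ℕ) → (Fin t → ℝ × ℝ) → Fin 2)
    (hπ : ∀ t, Measurable (π t)) :
    ∃ f : Fin 2 → Measure ℝ, (∀ k, IsProbabilityMeasure (f k)) ∧
      ∀ (Ω : Type) (_ : MeasurableSpace Ω) (P : Measure Ω),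
        IsProbabilityMeasure P →
        ∀ (X : Fin 2 → ℕ → Ω → ℝ),
        (∀ k t, Measurable (X k t)) →
        -- rewards i.i.d. over time and independent across actions ...
        iIndepFun (fun p : Fin 2 × ℕ => X p.1 p.2) P →
        -- ... with action `k`'s rewards distributed according to `f k`
        (∀ k t, Measure.map (X k t) P = f k) →
        (∑ t ∈ Finset.range T,
            (variance (fun ω => X (π t (fun s => (X 0 s.1 ω, X 1 s.1 ω))) t ω) P
              - lam * ∫ ω, X (π t (fun s => (X 0 s.1 ω, X 1 s.1 ω))) t ω ∂P))
          - T * min (variance id (f 0) - lam * ∫ x, x ∂(f 0))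
                    (variance id (f 1) - lam * ∫ x, x ∂(f 1))
          ≥ T / (4 * Real.exp 1) :=
  worst_case_regret_linear_lower_bound_general lam T π hπ
end
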